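/- arXiv:1601.02188 — 4 statements merged into one kernel-verified Lean document; each statement's English description precedes it below -/
import Mathlib

section
/- Fix c ∈ [0,1] and let f_c(y) = ∫₀¹ 𝟙{|x − y| ≤ c} dx. Then for every natural number ℓ ≥ 1, ∫₀¹ f_c(y)^ℓ dy = (2/(ℓ+1))·((min(2c,1))^{ℓ+1} − c^{ℓ+1}) + |2c − 1|·(min(2c,1))^ℓ. -/
/-!
The cross-section is `f y = min (y + c) 1 - max (y - c) 0`, symmetric under `y ↦ 1 - y`.
With `a = min c (1 - c)` it equals `y + c` on `[0, a]` and the constant `min (2c) 1` on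
`[a, 1 - a]`, so the moment is twice `∫₀ᵃ (y + c)^ℓ` plus `(1 - 2a) (min (2c) 1)^ℓ`;
finally `a + c = min (2c) 1` and `1 - 2a = |2c - 1|`.
-/

open MeasureTheory Set

theorem intervalIntegral_ite_abs_sub_le {a b : ℝ} (hab : a ≤ b) (y c : ℝ) :
    ∫ x in a..b, (if |x - y| ≤ c then (1:ℝ) else 0)
      = max (min (y + c) b - max (y - c) a) 0 := by
  have hind : (fun x : ℝ => if |x - y| ≤ c then (1:ℝ) else 0)
      = (Icc (y - c) (y + c)).indicator 1 := by
    ext x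
    simp only [indicator_apply, mem_Icc, Pi.one_apply, abs_sub_le_iff, sub_le_comm,
      tsub_le_iff_left, and_comm]
  have hae : (Icc (y - c) (y + c) ∩ Ioc a b : Set ℝ)
      =ᵐ[volume] Icc (max (y - c) a) (min (y + c) b) := by
    rw [← Icc_inter_Icc]
    exact (ae_eq_refl _).inter Ioc_ae_eq_Icc
  rw [hind, intervalIntegral.integral_of_le hab, integral_indicator_one measurableSet_Icc,
    Measure.real, Measure.restrict_apply measurableSet_Icc, measure_congr hae, Real.volume_Icc,
    ENNReal.toReal_ofReal']

def bandCrossSection (c y : ℝ) : ℝ := min (y + c) 1 - max (y - c) 0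

theorem integral_ite_abs_sub_le_eq_bandCrossSection {c y : ℝ} (hc : 0 ≤ c)
    (hy : y ∈ Icc (0:ℝ) 1) :
    ∫ x in (0:ℝ)..1, (if |x - y| ≤ c then (1:ℝ) else 0) = bandCrossSection c y := by
  rw [intervalIntegral_ite_abs_sub_le zero_le_one, bandCrossSection, max_eq_left]
  simp only [sub_nonneg, max_le_iff, le_min_iff]
  exact ⟨⟨by linarith, by linarith [hy.1]⟩, by linarith [hy.2], zero_le_one⟩

namespace bandCrossSection

@[fun_prop]
theorem continuous (c : ℝ) : Continuous (bandCrossSection c) := by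
  unfold bandCrossSection; fun_prop

theorem one_sub (c y : ℝ) : bandCrossSection c (1 - y) = bandCrossSection c y := by
  have h₁ : min (1 - y + c) 1 = 1 - max (y - c) 0 := by
    rw [← min_sub_sub_left]; ring_nf
  have h₂ : max (1 - y - c) 0 = 1 - min (y + c) 1 := by
    rw [← max_sub_sub_left]; ring_nf
  rw [bandCrossSection, bandCrossSection, h₁, h₂]; ring

theorem eq_add {c y : ℝ} (hyc : y ≤ c) (hy : y ≤ 1 - c) : bandCrossSection c y = y + c := by
  rw [bandCrossSection, min_eq_left (by linarith), max_eq_right (by linarith), sub_zero]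

theorem eq_min {c y : ℝ} (h₁ : min c (1 - c) ≤ y) (h₂ : y ≤ 1 - min c (1 - c)) :
    bandCrossSection c y = min (2 * c) 1 := by
  unfold bandCrossSection
  rcases le_total c (1 - c) with h | h
  · rw [min_eq_left h] at h₁ h₂
    rw [min_eq_left (by linarith), max_eq_left (by linarith), min_eq_left (by linarith)]; ring
  · rw [min_eq_right h] at h₁ h₂
    rw [min_eq_right (by linarith), max_eq_right (by linarith), min_eq_right (by linarith)]; ring

end bandCrossSection

theorem integral_add_const_pow (a c : ℝ) (n : ℕ) :
    ∫ y in (0:ℝ)..a, (y + c) ^ n = ((a + c) ^ (n + 1) - c ^ (n + 1)) / (n + 1) := by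
  rw [intervalIntegral.integral_comp_add_right (fun x => x ^ n) c, integral_pow, zero_add]

theorem integral_bandCrossSection_pow {c : ℝ} (hc0 : 0 ≤ c) (hc1 : c ≤ 1) (n : ℕ) :
    ∫ y in (0:ℝ)..1, bandCrossSection c y ^ n
      = 2 / ((n:ℝ) + 1) * (min (2 * c) 1 ^ (n + 1) - c ^ (n + 1))
        + |2 * c - 1| * min (2 * c) 1 ^ n := by
  set a := min c (1 - c) with ha
  have ha0 : 0 ≤ a := le_min hc0 (by linarith)
  have ha1 : a ≤ 1 - a := by linarith [min_le_left c (1 - c), min_le_right c (1 - c)]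
  have hac : a + c = min (2 * c) 1 := by rw [ha, ← min_add_add_right]; ring_nf
  have hmid : 1 - a - a = |2 * c - 1| := by
    rw [ha]; cases le_total c (1 - c) with
    | inl h => rw [min_eq_left h, abs_of_nonpos (by linarith)]; ring
    | inr h => rw [min_eq_right h, abs_of_nonneg (by linarith)]; ring
  have hint : ∀ p q : ℝ, IntervalIntegrable (fun y => bandCrossSection c y ^ n) volume p q :=
    fun p q => (by fun_prop : Continuous fun y => bandCrossSection c y ^ n).intervalIntegrable p q
  have hleft : ∫ y in (0:ℝ)..a, bandCrossSection c y ^ n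
      = (min (2 * c) 1 ^ (n + 1) - c ^ (n + 1)) / (n + 1) := by
    rw [← hac, ← integral_add_const_pow]
    refine intervalIntegral.integral_congr fun y hy => ?_
    rw [uIcc_of_le ha0] at hy
    simp only [bandCrossSection.eq_add (hy.2.trans (min_le_left _ _))
      (hy.2.trans (min_le_right _ _))]
  have hmiddle : ∫ y in a..(1 - a), bandCrossSection c y ^ n
      = |2 * c - 1| * min (2 * c) 1 ^ n := by
    rw [intervalIntegral.integral_congr (g := fun _ => min (2 * c) 1 ^ n),
      intervalIntegral.integral_const, smul_eq_mul, hmid]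
    intro y hy
    rw [uIcc_of_le ha1] at hy
    simp only [bandCrossSection.eq_min hy.1 hy.2]
  have hright : ∫ y in (1 - a)..1, bandCrossSection c y ^ n
      = ∫ y in (0:ℝ)..a, bandCrossSection c y ^ n :=
    calc ∫ y in (1 - a)..1, bandCrossSection c y ^ n
        = ∫ y in (0:ℝ)..a, bandCrossSection c (1 - y) ^ n := by
          rw [intervalIntegral.integral_comp_sub_left (fun y => bandCrossSection c y ^ n), sub_zero]
      _ = ∫ y in (0:ℝ)..a, bandCrossSection c y ^ n := by simp only [bandCrossSection.one_sub]
  rw [← intervalIntegral.integral_add_adjacent_intervals (hint 0 a) (hint a 1),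
    ← intervalIntegral.integral_add_adjacent_intervals (hint a (1 - a)) (hint (1 - a) 1),
    hright, hleft, hmiddle]
  ring

theorem cross_section_moments_general (c : ℝ) (hc0 : 0 ≤ c) (hc1 : c ≤ 1) (ℓ : ℕ) :
    (∫ y in (0:ℝ)..1, (∫ x in (0:ℝ)..1, (if |x - y| ≤ c then (1:ℝ) else 0))^ℓ)
      = (2/((ℓ:ℝ)+1)) * ((min (2*c) 1)^(ℓ+1) - c^(ℓ+1)) + |2*c - 1| * (min (2*c) 1)^ℓ := by
  rw [← integral_bandCrossSection_pow hc0 hc1]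
  refine intervalIntegral.integral_congr fun y hy => ?_
  rw [uIcc_of_le zero_le_one] at hy
  simp only [integral_ite_abs_sub_le_eq_bandCrossSection hc0 hy]

/-- The moments of the cross-section function of the banded strip. -/
theorem cross_section_moments (c : ℝ) (hc0 : 0 ≤ c) (hc1 : c ≤ 1) (ℓ : ℕ) (hℓ : 1 ≤ ℓ) :
    (∫ y in (0:ℝ)..1, (∫ x in (0:ℝ)..1, (if |x - y| ≤ c then (1:ℝ) else 0))^ℓ)
      = (2/((ℓ:ℝ)+1)) * ((min (2*c) 1)^(ℓ+1) - c^(ℓ+1)) + |2*c - 1| * (min (2*c) 1)^ℓ :=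
  cross_section_moments_general c hc0 hc1 ℓ
end

section
/- For real numbers a, b with 0 ≤ a ≤ b ≤ 1/2, we have ∫_{[0,1]³} 𝟙{|x₀ − x₁| ≤ a}·𝟙{|x₀ − x₂| ≤ b} dx₀ dx₁ dx₂ = 4ab − a²b − 2ab² − a³/3. -/
/-!
Integrating out `x₁` and `x₂` leaves `∫₀¹ ℓ_a(x) ℓ_b(x) dx`, where `ℓ_r(x) = unitOverlap r x` is
the length of `[x - r, x + r] ∩ [0, 1]`. Since `ℓ_r(1 - x) = ℓ_r(x)`, and `ℓ_r(x) = r + min x r`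
on `[0, 1/2]` when `r ≤ 1/2`, this is twice the integral over `[0, 1/2]` of a function that is
a polynomial on each of the pieces cut out by `a` and `b`.
-/

open MeasureTheory Set

theorem integral_ite_abs_sub_le (c r l u : ℝ) (hlu : l ≤ u) :
    ∫ x in l..u, (if |c - x| ≤ r then (1:ℝ) else 0) =
      max (min (c + r) u - max (c - r) l) 0 := by
  have hind : (fun x => if |c - x| ≤ r then (1:ℝ) else 0) = (Icc (c - r) (c + r)).indicator 1 := by
    ext x
    simp only [indicator_apply, mem_Icc, abs_le, Pi.one_apply]
    congr 1
    exact propext ⟨fun h => ⟨by linarith, by linarith⟩, fun h => ⟨by linarith, by linarith⟩⟩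
  rw [hind, intervalIntegral.integral_of_le hlu, ← integral_Icc_eq_integral_Ioc,
    integral_indicator_one measurableSet_Icc, measureReal_restrict_apply measurableSet_Icc,
    Icc_inter_Icc, Real.volume_real_Icc]

def unitOverlap (r x : ℝ) : ℝ := max (min (x + r) 1 - max (x - r) 0) 0

theorem continuous_unitOverlap (r : ℝ) : Continuous (unitOverlap r) := by
  unfold unitOverlap
  fun_prop

theorem unitOverlap_one_sub (r x : ℝ) : unitOverlap r (1 - x) = unitOverlap r x := by
  have hmin : min (1 - x + r) 1 = 1 - max (x - r) 0 := by
    rw [← min_sub_sub_left]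
    congr 1 <;> ring
  have hmax : max (1 - x - r) 0 = 1 - min (x + r) 1 := by
    rw [← max_sub_sub_left]
    congr 1 <;> ring
  rw [unitOverlap, unitOverlap, hmin, hmax, sub_sub_sub_cancel_left]

theorem unitOverlap_of_le_half {r x : ℝ} (hr : 0 ≤ r) (hr' : r ≤ 1 / 2) (hx : 0 ≤ x)
    (hx' : x ≤ 1 / 2) : unitOverlap r x = r + min x r := by
  rw [unitOverlap, min_eq_left (by linarith)]
  rcases le_total x r with hxr | hrx
  · rw [max_eq_right (show x - r ≤ 0 by linarith), min_eq_left hxr, sub_zero,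
      max_eq_left (by linarith)]
    ring
  · rw [max_eq_left (show 0 ≤ x - r by linarith), min_eq_right hrx,
      max_eq_left (by linarith)]
    ring

theorem integral_eq_two_mul_integral_half_of_symm {f : ℝ → ℝ} {m : ℝ} (hf : Continuous f)
    (hsymm : ∀ x, f (m - x) = f x) :
    ∫ x in 0..m, f x = 2 * ∫ x in 0..m / 2, f x := by
  have hsecond : ∫ x in m / 2..m, f x = ∫ x in 0..m / 2, f x :=
    calc ∫ x in m / 2..m, f x = ∫ x in m / 2..m, f (m - x) :=
          intervalIntegral.integral_congr fun x _ => (hsymm x).symm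
      _ = ∫ x in 0..m / 2, f x := by
          rw [intervalIntegral.integral_comp_sub_left, sub_self, sub_half]
  rw [← intervalIntegral.integral_add_adjacent_intervals (hf.intervalIntegrable 0 (m / 2))
    (hf.intervalIntegrable _ m), hsecond, two_mul]

theorem integral_quadratic (c₀ c₁ c₂ l u : ℝ) :
    ∫ x in l..u, (c₀ + c₁ * x + c₂ * x ^ 2) =
      c₀ * (u - l) + c₁ * (u ^ 2 - l ^ 2) / 2 + c₂ * (u ^ 3 - l ^ 3) / 3 := by
  rw [intervalIntegral.integral_add, intervalIntegral.integral_add]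
  · rw [intervalIntegral.integral_const, intervalIntegral.integral_const_mul, integral_id,
      intervalIntegral.integral_const_mul, integral_pow, smul_eq_mul]
    ring
  all_goals exact Continuous.intervalIntegrable (by fun_prop) _ _

theorem integral_add_min_mul_add_min {a b m : ℝ} (ha : 0 ≤ a) (hab : a ≤ b) (hbm : b ≤ m) :
    ∫ x in 0..m, (a + min x a) * (b + min x b) =
      4 * a * b * m - a * b ^ 2 - a ^ 2 * b / 2 - a ^ 3 / 6 := by
  have hint : ∀ l u, IntervalIntegrable (fun x => (a + min x a) * (b + min x b)) volume l u :=
    fun l u => Continuous.intervalIntegrable (by fun_prop) l u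
  have h₁ : ∫ x in 0..a, (a + min x a) * (b + min x b) =
      ∫ x in 0..a, (a * b + (a + b) * x + 1 * x ^ 2) := by
    refine intervalIntegral.integral_congr fun x hx => ?_
    rw [uIcc_of_le ha] at hx
    simp only [min_eq_left hx.2, min_eq_left (hx.2.trans hab)]
    ring
  have h₂ : ∫ x in a..b, (a + min x a) * (b + min x b) =
      ∫ x in a..b, (2 * a * b + 2 * a * x + 0 * x ^ 2) := by
    refine intervalIntegral.integral_congr fun x hx => ?_
    rw [uIcc_of_le hab] at hx
    simp only [min_eq_right hx.1, min_eq_left hx.2]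
    ring
  have h₃ : ∫ x in b..m, (a + min x a) * (b + min x b) =
      ∫ x in b..m, (4 * a * b + 0 * x + 0 * x ^ 2) := by
    refine intervalIntegral.integral_congr fun x hx => ?_
    rw [uIcc_of_le hbm] at hx
    simp only [min_eq_right (hab.trans hx.1), min_eq_right hx.1]
    ring
  rw [← intervalIntegral.integral_add_adjacent_intervals (hint 0 a) (hint a m),
    ← intervalIntegral.integral_add_adjacent_intervals (hint a b) (hint b m), h₁, h₂, h₃,
    integral_quadratic, integral_quadratic, integral_quadratic]
  ring

/-- The integral `Int_S(a,b)` for the colored double tree given by a two-star, for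
`0 ≤ a ≤ b ≤ 1/2`. -/
theorem two_star_integral (a b : ℝ) (ha : 0 ≤ a) (hab : a ≤ b) (hb : b ≤ 1/2) :
    (∫ x₀ in (0:ℝ)..1, ∫ x₁ in (0:ℝ)..1, ∫ x₂ in (0:ℝ)..1,
        (if |x₀ - x₁| ≤ a then (1:ℝ) else 0) * (if |x₀ - x₂| ≤ b then (1:ℝ) else 0))
      = 4*a*b - a^2*b - 2*a*b^2 - a^3/3 := by
  have hinner : ∀ x₀ : ℝ, (∫ x₁ in (0:ℝ)..1, ∫ x₂ in (0:ℝ)..1,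
      (if |x₀ - x₁| ≤ a then (1:ℝ) else 0) * (if |x₀ - x₂| ≤ b then (1:ℝ) else 0)) =
      unitOverlap a x₀ * unitOverlap b x₀ := fun x₀ => by
    rw [intervalIntegral.integral_congr fun x₁ _ => intervalIntegral.integral_const_mul _ _,
      intervalIntegral.integral_mul_const, integral_ite_abs_sub_le _ _ _ _ zero_le_one,
      integral_ite_abs_sub_le _ _ _ _ zero_le_one]
    rfl
  have hhalf : ∀ x ∈ uIcc (0:ℝ) (1 / 2),
      unitOverlap a x * unitOverlap b x = (a + min x a) * (b + min x b) := fun x hx => by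
    rw [uIcc_of_le (by norm_num)] at hx
    rw [unitOverlap_of_le_half ha (hab.trans hb) hx.1 hx.2,
      unitOverlap_of_le_half (ha.trans hab) hb hx.1 hx.2]
  calc _ = ∫ x in (0:ℝ)..1, unitOverlap a x * unitOverlap b x := by simp_rw [hinner]
    _ = 2 * ∫ x in (0:ℝ)..1 / 2, unitOverlap a x * unitOverlap b x :=
      integral_eq_two_mul_integral_half_of_symm
        ((continuous_unitOverlap a).mul (continuous_unitOverlap b))
        fun x => by rw [unitOverlap_one_sub, unitOverlap_one_sub]
    _ = 2 * ∫ x in (0:ℝ)..1 / 2, (a + min x a) * (b + min x b) := by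
      rw [intervalIntegral.integral_congr hhalf]
    _ = _ := by
      rw [integral_add_min_mul_add_min ha hab hb]
      ring
end

section
/- Let T = (V, E) be a finite tree (connected, acyclic simple graph) and let (c_e)_{e ∈ E} be real numbers in [0,1]. Then ∫_{[0,1]^V} ∏_{e = {u,v} ∈ E} 𝟙{|x_u − x_v| ≤ c_e} d𝐱 ≤ ∏_{e ∈ E} min(2c_e, 1). -/
/-!
Integrate the variables out one leaf at a time. A leaf `v` of the remaining forest occurs in a
single constraint `|x_v - x_w| ≤ c`; for fixed `x_w` the admissible `x_v ∈ [0,1]` form a set of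
measure at most `min (2c) 1`, and the other constraints do not involve `x_v`, so this factor
splits off and induction on the number of edges finishes the proof.
-/

open MeasureTheory

/-- The gap `|x_u − x_v|` across an undirected edge `{u,v}`. -/
noncomputable def edgeGap {V : Type*} (x : V → ℝ) : Sym2 V → ℝ :=
  Sym2.lift ⟨fun u v => |x u - x v|, fun u v => abs_sub_comm (x u) (x v)⟩

open scoped ENNReal
open Function Finset

theorem lintegral_pi_le_mul_of_lintegral_update_le {ι : Type*} [Fintype ι] [DecidableEq ι]
    {X : ι → Type*} [∀ i, MeasurableSpace (X i)] (μ : ∀ i, Measure (X i))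
    [∀ i, IsProbabilityMeasure (μ i)] {f g : (∀ i, X i) → ℝ≥0∞} (hf : Measurable f)
    (hg : Measurable g) (i : ι) {B : ℝ≥0∞} (hg_update : ∀ x t, g (update x i t) = g x)
    (hfg : ∀ x, ∫⁻ t, f (update x i t) ∂μ i ≤ B * g x) :
    ∫⁻ x, f x ∂Measure.pi μ ≤ B * ∫⁻ x, g x ∂Measure.pi μ := by
  rcases isEmpty_or_nonempty (∀ i, X i) with hX | ⟨⟨x⟩⟩
  · simp [lintegral_of_isEmpty]
  have hmarg : ∫⋯∫⁻_{i}, f ∂μ ≤ ∫⋯∫⁻_{i}, (fun y => B * g y) ∂μ := fun y => by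
    simpa [lmarginal_singleton, hg_update] using hfg y
  calc ∫⁻ x, f x ∂Measure.pi μ
      = (∫⋯∫⁻_univ, f ∂μ) x := lintegral_eq_lmarginal_univ x
    _ ≤ (∫⋯∫⁻_univ, (fun y => B * g y) ∂μ) x :=
        lmarginal_le_of_subset (subset_univ _) hf (hg.const_mul B) hmarg x
    _ = B * ∫⁻ x, g x ∂Measure.pi μ := by
        rw [← lintegral_eq_lmarginal_univ x, lintegral_const_mul B hg]

theorem lintegral_ite_abs_sub_le_eq_measure_closedBall (μ : Measure ℝ) (a r : ℝ) :
    ∫⁻ t, (if |t - a| ≤ r then 1 else 0) ∂μ = μ (Metric.closedBall a r) := by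
  rw [← lintegral_indicator_one measurableSet_closedBall]
  congr with t

theorem volume_restrict_Icc_closedBall_le (a r : ℝ) :
    volume.restrict (Set.Icc (0 : ℝ) 1) (Metric.closedBall a r)
      ≤ ENNReal.ofReal (min (2 * r) 1) := by
  rw [ENNReal.ofReal_min, ENNReal.ofReal_one]
  exact le_min ((Measure.restrict_apply_le _ _).trans_eq (Real.volume_closedBall a r))
    ((measure_mono (Set.subset_univ _)).trans_eq (by simp [Real.volume_Icc]))

namespace SimpleGraph

variable {V : Type*} {G : SimpleGraph V}

theorem IsAcyclic.exists_existsUnique_adj [Finite G.edgeSet] (hG : G.IsAcyclic)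
    (hne : G.edgeSet.Nonempty) : ∃ v, ∃! w, G.Adj v w := by
  obtain ⟨a, b, hab⟩ : ∃ a b, G.Adj a b := by
    obtain ⟨e, he⟩ := hne
    induction e using Sym2.ind
    exact ⟨_, _, he⟩
  have : Nonempty V := ⟨a⟩
  -- the start of a longest path is a leaf
  obtain ⟨u, v, p, hp, hmax⟩ := Walk.exists_isPath_forall_isPath_length_le_length G
  have hnil : ¬p.Nil := fun hnil => by
    have := hmax a b (.cons hab .nil) (Path.singleton hab).property
    rw [hnil.length_eq_zero, Walk.length_cons] at this
    omega
  refine ⟨u, p.snd, p.adj_snd hnil, fun w hadj => hG.eq_snd_of_adj_start hp hadj ?_⟩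
  by_contra hw
  simpa using hmax _ _ (p.cons hadj.symm) (hp.cons hw)

theorem IsAcyclic.exists_unique_edge_mem_of_subset_edgeSet (hG : G.IsAcyclic)
    {E : Finset (Sym2 V)} (hE : ↑E ⊆ G.edgeSet) (hne : E.Nonempty) :
    ∃ v w, s(v, w) ∈ E ∧ ∀ e ∈ E, v ∈ e → e = s(v, w) := by
  set H := fromEdgeSet (E : Set (Sym2 V))
  have hHG : H ≤ G := (fromEdgeSet_mono hE).trans_eq (fromEdgeSet_edgeSet G)
  have hH : ∀ e ∈ E, e ∈ H.edgeSet := fun e he => by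
    simpa [H, edgeSet_fromEdgeSet] using ⟨he, G.not_isDiag_of_mem_edgeSet (hE he)⟩
  have : Finite H.edgeSet := E.finite_toSet.subset (by simp [H, edgeSet_fromEdgeSet])
  obtain ⟨v, w, hvw, huniq⟩ := (hG.anti hHG).exists_existsUnique_adj
    (hne.elim fun e he => ⟨e, hH e he⟩)
  refine ⟨v, w, ((fromEdgeSet_adj _).1 hvw).1, fun e he hve => ?_⟩
  obtain ⟨w', rfl⟩ := Sym2.mem_iff_exists.1 hve
  rw [huniq w' (hH _ he)]

end SimpleGraph

section

variable {V : Type*}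

@[simp]
theorem edgeGap_mk (x : V → ℝ) (a b : V) : edgeGap x s(a, b) = |x a - x b| := rfl

theorem measurable_edgeGap (e : Sym2 V) : Measurable fun x : V → ℝ => edgeGap x e := by
  induction e using Sym2.ind with
  | _ a b => exact ((measurable_pi_apply a).sub (measurable_pi_apply b)).abs

theorem edgeGap_update_of_notMem [DecidableEq V] {v : V} {e : Sym2 V} (h : v ∉ e)
    (x : V → ℝ) (t : ℝ) : edgeGap (update x v t) e = edgeGap x e := by
  induction e using Sym2.ind with
  | _ a b =>
    obtain ⟨hva, hvb⟩ : v ≠ a ∧ v ≠ b := by simpa [Sym2.mem_iff, not_or] using h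
    simp [update_of_ne hva.symm, update_of_ne hvb.symm]

theorem measurable_prod_ite_edgeGap_le {M : Type*} [CommMonoidWithZero M] [MeasurableSpace M]
    [MeasurableMul₂ M] (c : Sym2 V → ℝ) (E : Finset (Sym2 V)) :
    Measurable fun x : V → ℝ => ∏ e ∈ E, if edgeGap x e ≤ c e then (1 : M) else 0 :=
  Finset.measurable_prod _ fun e _ =>
    Measurable.ite (measurableSet_le (measurable_edgeGap e) measurable_const)
      measurable_const measurable_const

theorem SimpleGraph.IsAcyclic.lintegral_prod_ite_edgeGap_le [Fintype V] [DecidableEq V]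
    {G : SimpleGraph V} (hG : G.IsAcyclic) (μ : Measure ℝ) [IsProbabilityMeasure μ]
    (c : Sym2 V → ℝ) (B : Sym2 V → ℝ≥0∞) (E : Finset (Sym2 V)) (hE : ↑E ⊆ G.edgeSet)
    (hB : ∀ e ∈ E, ∀ a, μ (Metric.closedBall a (c e)) ≤ B e) :
    ∫⁻ x, ∏ e ∈ E, (if edgeGap x e ≤ c e then 1 else 0) ∂Measure.pi (fun _ => μ)
      ≤ ∏ e ∈ E, B e := by
  induction E using Finset.strongInduction with | _ E ih =>
  rcases E.eq_empty_or_nonempty with rfl | hne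
  · simp
  obtain ⟨v, w, hvw, hleaf⟩ := hG.exists_unique_edge_mem_of_subset_edgeSet hE hne
  have hadj : G.Adj v w := hE hvw
  set g : (V → ℝ) → ℝ≥0∞ := fun x =>
    ∏ e ∈ E.erase s(v, w), if edgeGap x e ≤ c e then 1 else 0
  have hg_update : ∀ x t, g (update x v t) = g x := fun x t =>
    prod_congr rfl fun e he => by
      rw [edgeGap_update_of_notMem fun hv => ne_of_mem_erase he (hleaf e (mem_of_mem_erase he) hv)]
  have hsplit : ∀ x t, (∏ e ∈ E, if edgeGap (update x v t) e ≤ c e then (1 : ℝ≥0∞) else 0)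
      = (if |t - x w| ≤ c s(v, w) then 1 else 0) * g x := fun x t => by
    rw [← mul_prod_erase E _ hvw, edgeGap_mk, update_self, update_of_ne hadj.ne']
    exact congrArg _ (hg_update x t)
  have hg_ne_top : ∀ x, g x ≠ ∞ := fun x =>
    ENNReal.prod_ne_top fun e _ => by split_ifs <;> simp
  rw [← mul_prod_erase E B hvw]
  refine (lintegral_pi_le_mul_of_lintegral_update_le _ (measurable_prod_ite_edgeGap_le c E)
    (measurable_prod_ite_edgeGap_le c _) v hg_update fun x => ?_).trans
    (mul_le_mul_right (ih _ (erase_ssubset hvw) ((coe_subset.2 (erase_subset _ _)).trans hE)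
      fun e he => hB e (mem_of_mem_erase he)) _)
  simp_rw [hsplit]
  rw [lintegral_mul_const' _ _ (hg_ne_top x), lintegral_ite_abs_sub_le_eq_measure_closedBall]
  exact mul_le_mul_left (hB _ hvw _) _

end

/-- Upper bound on the band-constraint integral over a tree:
`Int_T(c) ≤ ∏_e min(2c_e, 1)`. -/
theorem tree_band_integral_upper {V : Type} [Fintype V] [DecidableEq V]
    (G : SimpleGraph V) [Fintype G.edgeSet] (hT : G.IsTree)
    (c : Sym2 V → ℝ) (hc : ∀ e ∈ G.edgeFinset, c e ∈ Set.Icc (0:ℝ) 1) :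
    (∫ x in Set.univ.pi (fun _ : V => Set.Icc (0:ℝ) 1),
        ∏ e ∈ G.edgeFinset, (if edgeGap x e ≤ c e then (1:ℝ) else 0))
      ≤ ∏ e ∈ G.edgeFinset, min (2 * c e) 1 := by
  have hmin : ∀ e ∈ G.edgeFinset, 0 ≤ min (2 * c e) 1 := fun e he =>
    le_min (by linarith [(hc e he).1]) zero_le_one
  have hfactor : ∀ (x : V → ℝ) e, 0 ≤ if edgeGap x e ≤ c e then (1:ℝ) else 0 := fun x e => by
    split_ifs <;> norm_num
  have : IsProbabilityMeasure (volume.restrict (Set.Icc (0 : ℝ) 1)) := ⟨by simp⟩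
  have key := hT.isAcyclic.lintegral_prod_ite_edgeGap_le (volume.restrict (Set.Icc (0 : ℝ) 1)) c
    (fun e => ENNReal.ofReal (min (2 * c e) 1)) G.edgeFinset (by simp)
    fun e _ a => volume_restrict_Icc_closedBall_le a (c e)
  rw [integral_eq_lintegral_of_nonneg_ae (.of_forall fun x => prod_nonneg fun e _ => hfactor x e)
    (measurable_prod_ite_edgeGap_le c _).aestronglyMeasurable, volume_pi, Measure.restrict_pi_pi]
  refine ENNReal.toReal_le_of_le_ofReal (prod_nonneg hmin) ?_
  rw [ENNReal.ofReal_prod_of_nonneg hmin]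
  convert key using 3 with x
  rw [ENNReal.ofReal_prod_of_nonneg fun e _ => hfactor x e]
  simp [apply_ite ENNReal.ofReal]
end

section
/- Define q : (0,1) → ℝ piecewise by q(c) = (8c²(1/2 − c) + (14/3)c³)/(2c − c²)² for 0 < c ≤ 1/2 and q(c) = (2c − 1 + (2/3)(1 − c³))/(2c − c²)² for 1/2 ≤ c < 1. Then q is well-defined (the two formulas agree at c = 1/2), q(c) ≠ 1 for all c ∈ (0,1), and lim_{c→0⁺} q(c) = lim_{c→1⁻} q(c) = 1. -/
open Filter Topology

/-- The limiting mixed traffic moment of a proper proportional-growth RBM and its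
degree matrix, as a function of the proportionality constant `c`. -/
noncomputable def mixedMoment (c : ℝ) : ℝ :=
  if c ≤ 1/2 then (8*c^2*(1/2 - c) + 14/3*c^3) / (2*c - c^2)^2
  else (2*c - 1 + 2/3*(1 - c^3)) / (2*c - c^2)^2

lemma denom_pos {c : ℝ} (h0 : 0 < c) (h1 : c < 1) : 0 < (2*c - c^2)^2 := by
  have : 0 < 2*c - c^2 := by nlinarith
  positivity

/-- The function `q = mixedMoment` is well-defined (the two branches agree at `c = 1/2`),
differs from `1` on all of `(0,1)`, and tends to `1` at both endpoints. -/
theorem mixedMoment_properties :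
    (8*(1/2:ℝ)^2*(1/2 - 1/2) + 14/3*(1/2:ℝ)^3) / (2*(1/2:ℝ) - (1/2:ℝ)^2)^2
      = (2*(1/2:ℝ) - 1 + 2/3*(1 - (1/2:ℝ)^3)) / (2*(1/2:ℝ) - (1/2:ℝ)^2)^2 ∧
    (∀ c ∈ Set.Ioo (0:ℝ) 1, mixedMoment c ≠ 1) ∧
    Tendsto mixedMoment (𝓝[>] 0) (𝓝 1) ∧
    Tendsto mixedMoment (𝓝[<] 1) (𝓝 1) := by
  refine ⟨by norm_num, ?_, ?_, ?_⟩
  · rintro c ⟨h0, h1⟩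
    have hD := denom_pos h0 h1
    unfold mixedMoment
    split_ifs with hc
    · intro h
      rw [div_eq_one_iff_eq (ne_of_gt hD)] at h
      nlinarith [pow_pos h0 3]
    · push_neg at hc
      intro h
      rw [div_eq_one_iff_eq (ne_of_gt hD)] at h
      nlinarith [pow_pos (sub_pos.2 h1) 3, mul_pos (pow_pos (sub_pos.2 h1) 3) (by linarith : (0:ℝ) < 3*c - 1)]
  · have hg : Tendsto (fun c : ℝ => (4 - 10/3*c)/(2-c)^2) (𝓝 0) (𝓝 1) := by
      have h1 : ((4 : ℝ) - 10/3*0)/(2-(0:ℝ))^2 = 1 := by norm_num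
      rw [← h1]
      apply Tendsto.div
      · exact (continuous_const.sub (continuous_const.mul continuous_id)).tendsto 0
      · exact ((continuous_const.sub continuous_id).pow 2).tendsto 0
      · norm_num
    refine (hg.mono_left nhdsWithin_le_nhds).congr' ?_
    filter_upwards [Ioo_mem_nhdsGT_of_mem (by norm_num : (0:ℝ) ∈ Set.Ico 0 (1/2))] with c hc
    obtain ⟨h0, h1⟩ := hc
    have hne : c ≠ 0 := ne_of_gt h0
    have h2 : (2 : ℝ) - c ≠ 0 := by linarith
    rw [mixedMoment, if_pos (le_of_lt h1)]
    rw [show (2*c - c^2)^2 = c^2 * (2-c)^2 by ring,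
        show 8*c^2*(1/2 - c) + 14/3*c^3 = c^2 * (4 - 10/3*c) by ring,
        mul_div_mul_left _ _ (pow_ne_zero 2 hne)]
  · have hg : Tendsto (fun c : ℝ => (2*c - 1 + 2/3*(1 - c^3)) / (2*c - c^2)^2) (𝓝 1) (𝓝 1) := by
      have key := Tendsto.div
        (Continuous.tendsto (by fun_prop : Continuous fun c : ℝ => 2*c - 1 + 2/3*(1 - c^3)) 1)
        (Continuous.tendsto (by fun_prop : Continuous fun c : ℝ => (2*c - c^2)^2) 1)
        (by norm_num)
      norm_num at key
      exact key
    refine (hg.mono_left nhdsWithin_le_nhds).congr' ?_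
    filter_upwards [Ioo_mem_nhdsLT_of_mem (by norm_num : (1:ℝ) ∈ Set.Ioc (1/2) 1)] with c hc
    rw [mixedMoment, if_neg (by linarith [hc.1])]
end
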